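/- arXiv:1603.03765 — 2 statements merged into one kernel-verified Lean document; each statement's English description precedes it below -/
import Mathlib

section
/- For every even positive integer p and every integer m ≥ 1, the series ∑_{n=1}^∞ ([∑_{k=1}^{p/2} L_{(2k-1)·m·p^n}] − 1) / F_{m·p^{n+1}} converges with sum 1/F_{mp}. -/
/-- The Lucas numbers: L 0 = 2, L 1 = 1, L (n+2) = L n + L (n+1). -/
def lucas : ℕ → ℕ
  | 0 => 2
  | 1 => 1
  | n + 2 => lucas n + lucas (n + 1)

/-!
By Binet's formulas, `F_N L_{x+N} = F_{x+2N} - (-1)^N F_x`. For even `N` the sum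
`∑_{k=1}^{q} L_{(2k-1)N}` therefore telescopes to `F_{2qN} / F_N`, so with `N = m p^(n+1)` and
`p = 2q` the `n`-th term of the series is `1/F_{m p^(n+1)} - 1/F_{m p^(n+2)}`. The series
telescopes as well, and its sum is `1/F_{mp}` because `F_{m p^n} → ∞`.
-/

open Real goldenRatio Filter Topology Finset

lemma lucas_eq_goldenRatio_pow_add_goldenConj_pow (n : ℕ) : (lucas n : ℝ) = φ ^ n + ψ ^ n := by
  induction n using Nat.twoStepInduction with
  | zero => norm_num [lucas]
  | one => simp [lucas, goldenRatio_add_goldenConj]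
  | more n ih ih' =>
    rw [lucas, Nat.cast_add, ih, ih']
    linear_combination -(φ ^ n * goldenRatio_sq + ψ ^ n * goldenConj_sq)

lemma fib_mul_lucas_add (N x : ℕ) :
    (Nat.fib N : ℝ) * lucas (x + N) = Nat.fib (x + 2 * N) - (-1) ^ N * Nat.fib x := by
  rw [lucas_eq_goldenRatio_pow_add_goldenConj_pow, coe_fib_eq, coe_fib_eq, coe_fib_eq,
    ← goldenRatio_mul_goldenConj, mul_pow]
  generalize φ = a, ψ = b
  ring

lemma fib_mul_sum_lucas {N : ℕ} (hN : Even N) (q : ℕ) :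
    (Nat.fib N : ℝ) * ∑ k ∈ Icc 1 q, (lucas ((2 * k - 1) * N) : ℝ) = Nat.fib (2 * q * N) := by
  induction q with
  | zero => simp
  | succ q ih =>
    have hstep := fib_mul_lucas_add N (2 * q * N)
    rw [hN.neg_one_pow, one_mul] at hstep
    have harg : (2 * (q + 1) - 1) * N = 2 * q * N + N := by
      rw [show 2 * (q + 1) - 1 = 2 * q + 1 by omega]; ring
    rw [sum_Icc_succ_top (by omega), mul_add, ih, harg, hstep,
      show 2 * (q + 1) * N = 2 * q * N + 2 * N by ring]
    ring

lemma sum_lucas_sub_one_div_fib {N q : ℕ} (hN : Even N) (hN₀ : N ≠ 0) (hq : q ≠ 0) :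
    ((∑ k ∈ Icc 1 q, (lucas ((2 * k - 1) * N) : ℝ)) - 1) / Nat.fib (2 * q * N) =
      1 / Nat.fib N - 1 / Nat.fib (2 * q * N) := by
  have hF : (Nat.fib N : ℝ) ≠ 0 := by simpa using hN₀
  have hF' : (Nat.fib (2 * q * N) : ℝ) ≠ 0 := by simp [hN₀, hq]
  rw [← fib_mul_sum_lucas hN q] at hF' ⊢
  generalize ∑ k ∈ Icc 1 q, (lucas ((2 * k - 1) * N) : ℝ) = S at hF' ⊢
  have hS : S ≠ 0 := right_ne_zero_of_mul hF'
  field_simp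

lemma Antitone.hasSum_sub_succ {g : ℕ → ℝ} (hg : Antitone g) {l : ℝ}
    (hl : Tendsto g atTop (𝓝 l)) : HasSum (fun n ↦ g n - g (n + 1)) (g 0 - l) := by
  rw [hasSum_iff_tendsto_nat_of_nonneg fun n ↦ sub_nonneg.2 (hg n.le_succ)]
  simp_rw [sum_range_sub']
  exact tendsto_const_nhds.sub hl

theorem stmt17 (p m : ℕ) (hp : Even p) (hp' : 0 < p) (hm : 1 ≤ m) :
    HasSum
      (fun n : ℕ =>
        ((∑ k ∈ Finset.Icc 1 (p / 2), (lucas ((2 * k - 1) * m * p ^ (n + 1)) : ℝ)) - 1) /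
          (Nat.fib (m * p ^ (n + 2)) : ℝ))
      (1 / (Nat.fib (m * p) : ℝ)) := by
  have hp₂ : 1 < p := by obtain ⟨j, rfl⟩ := hp; omega
  have hidx : StrictMono fun n ↦ m * p ^ (n + 1) := fun a b hab ↦
    Nat.mul_lt_mul_of_pos_left (Nat.pow_lt_pow_right hp₂ (by omega)) hm
  set g : ℕ → ℝ := fun n ↦ 1 / (Nat.fib (m * p ^ (n + 1)) : ℝ)
  have hg_anti : Antitone g := antitone_nat_of_succ_le fun n ↦
    one_div_le_one_div_of_le (Nat.cast_pos.2 (Nat.fib_pos.2 (by positivity)))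
      (by exact_mod_cast Nat.fib_mono (hidx n.lt_succ_self).le)
  have hfib : Tendsto Nat.fib atTop atTop := Nat.fib_mono.tendsto_atTop_atTop
    fun b ↦ ⟨b + 2, Nat.fib_add_two_strictMono.le_apply.trans (by simp)⟩
  have hg_lim : Tendsto g atTop (𝓝 0) := tendsto_const_nhds.div_atTop
    (tendsto_natCast_atTop_atTop.comp (hfib.comp hidx.tendsto_atTop))
  have hterm (n : ℕ) : ((∑ k ∈ Icc 1 (p / 2), (lucas ((2 * k - 1) * m * p ^ (n + 1)) : ℝ)) - 1) /
      (Nat.fib (m * p ^ (n + 2)) : ℝ) = g n - g (n + 1) := by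
    have hN : Even (m * p ^ (n + 1)) := by rw [pow_succ, ← mul_assoc]; exact hp.mul_left _
    have hN₀ : m * p ^ (n + 1) ≠ 0 := by positivity
    have hq : p / 2 ≠ 0 := by omega
    have h := sum_lucas_sub_one_div_fib hN hN₀ hq
    rw [show 2 * (p / 2) * (m * p ^ (n + 1)) = m * p ^ (n + 2) by
      rw [Nat.two_mul_div_two_of_even hp]; ring] at h
    simp_rw [← mul_assoc] at h
    simpa [g] using h
  simpa [g, hterm] using hg_anti.hasSum_sub_succ hg_lim
end

section
/- For every odd integer p ≥ 3, the series ∑_{n=1}^∞ (-1)^{n(p-1)/2} · [∑_{k=1}^{(p-1)/2} (-1)^k · L_{2k·p^n}] / F_{p^{n+1}} converges with sum 1/F_p. -/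
open Real Finset goldenRatio

theorem coe_lucas_eq : ∀ n : ℕ, (lucas n : ℝ) = φ ^ n + ψ ^ n
  | 0 => by norm_num [lucas]
  | 1 => by simp [lucas]
  | n + 2 => by
    have h5 : √5 ^ 2 = 5 := sq_sqrt (by norm_num)
    rw [lucas, Nat.cast_add, coe_lucas_eq n, coe_lucas_eq (n + 1)]
    linear_combination φ ^ n * goldenRatio_sq + ψ ^ n * goldenConj_sq - (φ ^ n + ψ ^ n) / 2 * h5

theorem sub_mul_one_add_sum_alternating_pow {R : Type*} [CommRing R] {u v : R}
    (huv : u * v = -1) (q : ℕ) :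
    (u - v) * (1 + ∑ k ∈ Icc 1 q, (-1) ^ k * (u ^ (2 * k) + v ^ (2 * k))) =
      (-1) ^ q * (u ^ (2 * q + 1) - v ^ (2 * q + 1)) := by
  induction q with
  | zero => simp
  | succ q ih =>
    rw [sum_Icc_succ_top (by omega), show 2 * (q + 1) = 2 * q + 2 by ring]
    linear_combination ih + (-1) ^ q * (u ^ (2 * q + 1) - v ^ (2 * q + 1)) * huv

theorem fib_mul_one_add_sum_alternating_lucas (q : ℕ) {m : ℕ} (hm : Odd m) :
    (Nat.fib m : ℝ) * (1 + ∑ k ∈ Icc 1 q, (-1) ^ k * (lucas (2 * k * m) : ℝ)) =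
      (-1) ^ q * (Nat.fib ((2 * q + 1) * m) : ℝ) := by
  have huv : φ ^ m * ψ ^ m = -1 := by
    rw [← mul_pow, goldenRatio_mul_goldenConj, hm.neg_one_pow]
  have hlucas : ∀ k ∈ Icc 1 q, (-1 : ℝ) ^ k * (lucas (2 * k * m) : ℝ) =
      (-1) ^ k * ((φ ^ m) ^ (2 * k) + (ψ ^ m) ^ (2 * k)) := fun k _ => by
    rw [coe_lucas_eq, ← pow_mul, ← pow_mul, mul_comm m]
  rw [sum_congr rfl hlucas, coe_fib_eq, coe_fib_eq, mul_comm _ m, pow_mul, pow_mul]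
  linear_combination sub_mul_one_add_sum_alternating_pow huv q / √5

theorem alternating_lucas_sum_div_fib_eq_sub (q n : ℕ) {m : ℕ} (hm : Odd m) :
    ((-1 : ℝ) ^ q) ^ (n + 1) * (∑ k ∈ Icc 1 q, (-1) ^ k * (lucas (2 * k * m) : ℝ)) /
        (Nat.fib ((2 * q + 1) * m) : ℝ) =
      ((-1) ^ q) ^ n / (Nat.fib m : ℝ) -
        ((-1) ^ q) ^ (n + 1) / (Nat.fib ((2 * q + 1) * m) : ℝ) := by
  have hfib : ∀ {k : ℕ}, 0 < k → (Nat.fib k : ℝ) ≠ 0 := fun hk =>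
    Nat.cast_ne_zero.2 (Nat.fib_pos.2 hk).ne'
  have hm₀ : 0 < m := hm.pos
  have hsq : ((-1 : ℝ) ^ q) ^ 2 = 1 := by rw [← pow_mul, mul_comm, pow_mul]; norm_num
  field_simp [hfib hm₀, hfib (Nat.mul_pos (Nat.succ_pos (2 * q)) hm₀)]
  linear_combination ((-1 : ℝ) ^ q) ^ (n + 1) * fib_mul_one_add_sum_alternating_lucas q hm +
    ((-1 : ℝ) ^ q) ^ n * (Nat.fib ((2 * q + 1) * m) : ℝ) * hsq

theorem three_pow_le_fib_pow_succ {p : ℕ} (hp : 3 ≤ p) (n : ℕ) :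
    3 ^ n ≤ Nat.fib (p ^ (n + 1)) := by
  rcases n with _ | n
  · simp only [pow_zero, zero_add, pow_one]
    exact Nat.fib_pos.2 (by omega)
  · have h : 3 ^ (n + 2) ≤ p ^ (n + 2) := Nat.pow_le_pow_left hp _
    have h9 : 3 ^ 2 ≤ 3 ^ (n + 2) := Nat.pow_le_pow_right (by norm_num) (by omega)
    calc 3 ^ (n + 1) ≤ 3 ^ (n + 2) := Nat.pow_le_pow_right (by norm_num) (by omega)
      _ ≤ p ^ (n + 2) := h
      _ ≤ Nat.fib (p ^ (n + 2)) := Nat.le_fib_self (le_trans (by norm_num) (h9.trans h))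

theorem summable_pow_div_fib_pow_succ {p : ℕ} (hp : 3 ≤ p) {ε : ℝ} (hε : ‖ε‖ ≤ 1) :
    Summable fun n : ℕ => ε ^ n / (Nat.fib (p ^ (n + 1)) : ℝ) := by
  refine Summable.of_norm_bounded (summable_geometric_of_lt_one (r := 1 / 3) (by norm_num)
    (by norm_num)) fun n => ?_
  have h3 : (3 : ℝ) ^ n ≤ Nat.fib (p ^ (n + 1)) := by
    exact_mod_cast three_pow_le_fib_pow_succ hp n
  rw [norm_div, norm_pow, Real.norm_natCast, div_pow, one_pow]
  exact div_le_div₀ zero_le_one (pow_le_one₀ (norm_nonneg _) hε) (by positivity) h3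

theorem Summable.hasSum_sub_succ {G : Type*} [AddCommGroup G] [TopologicalSpace G]
    [IsTopologicalAddGroup G] {f : ℕ → G} (hf : Summable f) :
    HasSum (fun n => f n - f (n + 1)) (f 0) := by
  obtain ⟨a, ha⟩ := hf
  have hshift : HasSum (fun n => f (n + 1)) (a - f 0) := by
    simpa using (hasSum_nat_add_iff' 1).2 ha
  simpa using ha.sub hshift

theorem stmt19 (p : ℕ) (hp : Odd p) (hp' : 3 ≤ p) :
    HasSum
      (fun n : ℕ =>
        (-1 : ℝ) ^ ((n + 1) * (p - 1) / 2) *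
          (∑ k ∈ Finset.Icc 1 ((p - 1) / 2), (-1 : ℝ) ^ k * (lucas (2 * k * p ^ (n + 1)) : ℝ)) /
          (Nat.fib (p ^ (n + 2)) : ℝ))
      (1 / (Nat.fib p : ℝ)) := by
  obtain ⟨q, rfl⟩ := hp
  have hsum := (summable_pow_div_fib_pow_succ hp' (ε := (-1) ^ q) (by simp)).hasSum_sub_succ
  rw [pow_zero, zero_add, pow_one] at hsum
  refine hsum.congr_fun fun n => ?_
  have hexp : (n + 1) * (2 * q + 1 - 1) / 2 = q * (n + 1) := by
    rw [Nat.add_sub_cancel, mul_left_comm, Nat.mul_div_cancel_left _ two_pos, mul_comm]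
  rw [hexp, show (2 * q + 1 - 1) / 2 = q by omega, pow_mul, pow_succ' _ (n + 1)]
  exact alternating_lucas_sum_div_fib_eq_sub q n (odd_two_mul_add_one q).pow
end
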